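/- Polynomial-attention layer bound (Lemma D, lem216): let f : 𝒳^M × 𝒳^M → ℝ^{n×n} and let W_1, …, W_d ∈ ℝ^{n×n} be fixed matrices. Define g(A, B) := (W_d · f(A, B)) · (W_{d−1} · f(A, B)) ⋯ (W_1 · f(A, B)) (pointwise matrix products). Then sep(g) ≤ n^{2d−1} · sep(f)^d. -/

import Mathlib

open scoped BigOperators

/-- Separation rank of a scalar-valued function of two groups of variables. -/
noncomputable def sepRank {𝒳 : Type*} {M : ℕ}
    (y : (Fin M → 𝒳) → (Fin M → 𝒳) → ℝ) : ℕ∞ :=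
  sInf {R : ℕ∞ | ∃ r : ℕ, R = (r : ℕ∞) ∧ ∃ g g' : Fin r → (Fin M → 𝒳) → ℝ,
    ∀ A B, y A B = ∑ i, g i A * g' i B}

/-- Separation rank of a matrix-valued function: maximum over output entries. -/
noncomputable def sepRankM {𝒳 : Type*} {M n m : ℕ}
    (f : (Fin M → 𝒳) → (Fin M → 𝒳) → Matrix (Fin n) (Fin m) ℝ) : ℕ∞ :=
  ⨆ i : Fin n, ⨆ j : Fin m, sepRank (fun A B => f A B i j)

/-!
Separation rank is subadditive under pointwise sums, submultiplicative under pointwise products,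
and at most one on constants. Hence an entry of `W * F` with `W` constant has rank at most
`n · sepRankM F`, and an entry of a product of `e + 1` matrices whose entries have rank at most `t`,
being a sum of `n` products of an entry of the first factor with an entry of the product of the
others, has rank at most `n ^ e * t ^ (e + 1)`. With `t = n · sepRankM f` this is the bound.
-/

section Scalar

variable {𝒳 : Type*} {M : ℕ} {y z : (Fin M → 𝒳) → (Fin M → 𝒳) → ℝ}

theorem sepRank_le_card {ι : Type*} [Fintype ι] (g g' : ι → (Fin M → 𝒳) → ℝ)
    (hy : ∀ A B, y A B = ∑ i, g i A * g' i B) : sepRank y ≤ Fintype.card ι := by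
  let e := Fintype.equivFin ι
  refine sInf_le ⟨_, rfl, fun i => g (e.symm i), fun i => g' (e.symm i), fun A B => ?_⟩
  rw [hy, ← e.symm.sum_comp]

theorem exists_sum_of_sepRank_le {r : ℕ} (h : sepRank y ≤ r) :
    ∃ r' ≤ r, ∃ g g' : Fin r' → (Fin M → 𝒳) → ℝ, ∀ A B, y A B = ∑ i, g i A * g' i B := by
  obtain ⟨_, hmem, -⟩ := sInf_lt_iff.mp (h.trans_lt (ENat.natCast_lt_top r))
  obtain ⟨r', hr', hy⟩ := csInf_mem ⟨_, hmem⟩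
  rw [sepRank, hr'] at h
  exact ⟨r', by exact_mod_cast h, hy⟩

theorem sepRank_const_le_one (c : ℝ) : sepRank (fun (_ _ : Fin M → 𝒳) => c) ≤ 1 := by
  simpa using sepRank_le_card (ι := Unit) (fun _ _ => c) (fun _ _ => 1) (by simp)

theorem sepRank_zero : sepRank (fun (_ _ : Fin M → 𝒳) => (0 : ℝ)) = 0 :=
  nonpos_iff_eq_zero.mp <| by
    simpa using sepRank_le_card (ι := Empty) (fun _ _ => 0) (fun _ _ => 0) (by simp)

theorem sepRank_add_le {r s : ℕ} (hy : sepRank y ≤ r) (hz : sepRank z ≤ s) :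
    sepRank (fun A B => y A B + z A B) ≤ (r + s : ℕ) := by
  obtain ⟨r', hr, g, g', hg⟩ := exists_sum_of_sepRank_le hy
  obtain ⟨s', hs, h, h', hh⟩ := exists_sum_of_sepRank_le hz
  refine (sepRank_le_card (Sum.elim g h) (Sum.elim g' h') fun A B => ?_).trans ?_
  · rw [hg, hh, Fintype.sum_sum_type]
    rfl
  · simp only [Fintype.card_sum, Fintype.card_fin]
    exact_mod_cast add_le_add hr hs

theorem sepRank_mul_le {r s : ℕ} (hy : sepRank y ≤ r) (hz : sepRank z ≤ s) :
    sepRank (fun A B => y A B * z A B) ≤ (r * s : ℕ) := by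
  obtain ⟨r', hr, g, g', hg⟩ := exists_sum_of_sepRank_le hy
  obtain ⟨s', hs, h, h', hh⟩ := exists_sum_of_sepRank_le hz
  refine (sepRank_le_card (fun (p : Fin r' × Fin s') A => g p.1 A * h p.2 A)
    (fun p B => g' p.1 B * h' p.2 B) fun A B => ?_).trans ?_
  · rw [hg, hh, Finset.sum_mul_sum, ← Finset.univ_product_univ, Finset.sum_product]
    exact Finset.sum_congr rfl fun _ _ => Finset.sum_congr rfl fun _ _ => by ring
  · simp only [Fintype.card_prod, Fintype.card_fin]
    exact_mod_cast Nat.mul_le_mul hr hs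

theorem sepRank_sum_le {α : Type*} (t : Finset α) {y : α → (Fin M → 𝒳) → (Fin M → 𝒳) → ℝ}
    {r : ℕ} (hy : ∀ a ∈ t, sepRank (y a) ≤ r) :
    sepRank (fun A B => ∑ a ∈ t, y a A B) ≤ (t.card * r : ℕ) := by
  classical
  induction t using Finset.induction_on with
  | empty => simp [sepRank_zero]
  | insert a t ha ih =>
    simp only [Finset.sum_insert ha, Finset.card_insert_of_notMem ha]
    refine (sepRank_add_le (hy a (t.mem_insert_self a))
      (ih fun b hb => hy b (Finset.mem_insert_of_mem hb))).trans ?_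
    exact_mod_cast (by ring : r + t.card * r = (t.card + 1) * r).le

end Scalar

section Matrix

variable {𝒳 : Type*} {M : ℕ}

theorem sepRankM_le_iff {n m : ℕ} {f : (Fin M → 𝒳) → (Fin M → 𝒳) → Matrix (Fin n) (Fin m) ℝ}
    {r : ℕ∞} : sepRankM f ≤ r ↔ ∀ i j, sepRank (fun A B => f A B i j) ≤ r := by
  simp only [sepRankM, iSup_le_iff]

theorem sepRankM_const_le_one {n m : ℕ} (W : Matrix (Fin n) (Fin m) ℝ) :
    sepRankM (fun (_ _ : Fin M → 𝒳) => W) ≤ 1 :=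
  sepRankM_le_iff.mpr fun i j => sepRank_const_le_one (W i j)

theorem sepRankM_mul_le {l m n r s : ℕ}
    {F : (Fin M → 𝒳) → (Fin M → 𝒳) → Matrix (Fin l) (Fin m) ℝ}
    {G : (Fin M → 𝒳) → (Fin M → 𝒳) → Matrix (Fin m) (Fin n) ℝ}
    (hF : sepRankM F ≤ r) (hG : sepRankM G ≤ s) :
    sepRankM (fun A B => F A B * G A B) ≤ (m * (r * s) : ℕ) := by
  refine sepRankM_le_iff.mpr fun i j => ?_
  simp only [Matrix.mul_apply]
  simpa using sepRank_sum_le Finset.univ fun k _ =>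
    sepRank_mul_le (sepRankM_le_iff.mp hF i k) (sepRankM_le_iff.mp hG k j)

theorem sepRankM_list_prod_ofFn_le {n t : ℕ} :
    ∀ (e : ℕ) (F : Fin (e + 1) → (Fin M → 𝒳) → (Fin M → 𝒳) → Matrix (Fin n) (Fin n) ℝ),
      (∀ k, sepRankM (F k) ≤ t) →
      sepRankM (fun A B => (List.ofFn fun k => F k A B).prod) ≤ (n ^ e * t ^ (e + 1) : ℕ)
  | 0, F, hF => by simpa using hF 0
  | e + 1, F, hF => by
    simp only [List.ofFn_succ (n := e + 1), List.prod_cons]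
    refine (sepRankM_mul_le (hF 0)
      (sepRankM_list_prod_ofFn_le e (fun k => F k.succ) fun k => hF k.succ)).trans ?_
    exact_mod_cast (by ring :
      n * (t * (n ^ e * t ^ (e + 1))) = n ^ (e + 1) * t ^ (e + 1 + 1)).le

end Matrix

theorem sepRank_poly_attention_layer_general {𝒳 : Type*} {M n : ℕ} (d : ℕ)
    (f : (Fin M → 𝒳) → (Fin M → 𝒳) → Matrix (Fin n) (Fin n) ℝ)
    (W : Fin d → Matrix (Fin n) (Fin n) ℝ) :
    sepRankM (fun A B => (List.ofFn fun j : Fin d => W j * f A B).prod)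
      ≤ (n : ℕ∞) ^ (2 * d - 1) * sepRankM f ^ d := by
  obtain _ | e := d
  · simpa using sepRankM_const_le_one (𝒳 := 𝒳) (M := M) (1 : Matrix (Fin n) (Fin n) ℝ)
  rcases eq_or_ne (sepRankM f) ⊤ with hf | hf
  · have hn : n ≠ 0 := by
      rintro rfl
      simp [sepRankM] at hf
    simp [hf, hn]
  obtain ⟨s, hs⟩ := ENat.ne_top_iff_exists.mp hf
  have hWf : ∀ k, sepRankM (fun A B => W k * f A B) ≤ (n * (1 * s) : ℕ) := fun k =>
    sepRankM_mul_le (by exact_mod_cast sepRankM_const_le_one (W k)) hs.ge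
  refine (sepRankM_list_prod_ofFn_le e _ hWf).trans (le_of_eq ?_)
  rw [← hs, show 2 * (e + 1) - 1 = e + (e + 1) by omega]
  push_cast
  ring

/-- polynomial-attention layer bound (Lemma D, lem216). -/
theorem sepRank_poly_attention_layer {𝒳 : Type*} {M n : ℕ} (d : ℕ) (hd : 1 ≤ d)
    (f : (Fin M → 𝒳) → (Fin M → 𝒳) → Matrix (Fin n) (Fin n) ℝ)
    (W : Fin d → Matrix (Fin n) (Fin n) ℝ) :
    sepRankM (fun A B => (List.ofFn fun j : Fin d => W j * f A B).prod)
      ≤ (n : ℕ∞) ^ (2 * d - 1) * sepRankM f ^ d :=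
  sepRank_poly_attention_layer_general d f W
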